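/- arXiv:1010.0346 — 7 statements merged into one kernel-verified Lean document; each statement's English description precedes it below -/
import Mathlib

section
/- Let p,q ≥ 1, n = p+q. Let λ = diag(λ₁,...,λ_p, μ₁,...,μ_q) be an admissible traceless real diagonal matrix and g ∈ SU(p,q), and set s = g⁻¹·exp(λ)·g (an admissible element of Q). If x ∈ ℂⁿ is timelike, then s·x is timelike. -/
open Matrix Complex

noncomputable section

/-- The signature matrix J_{p,q} = diag(1,...,1,-1,...,-1). -/
def Jpq (p q : ℕ) : Matrix (Fin (p + q)) (Fin (p + q)) ℂ :=
  Matrix.diagonal (fun i => if (i : ℕ) < p then 1 else -1)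

/-- The group SU(p,q) as a subset of matrices: det = 1 and g* J g = J. -/
def SUpq (p q : ℕ) : Set (Matrix (Fin (p + q)) (Fin (p + q)) ℂ) :=
  {g | g.det = 1 ∧ gᴴ * Jpq p q * g = Jpq p q}

/-- The involution M† = J M* J. -/
def dag (p q : ℕ) (M : Matrix (Fin (p + q)) (Fin (p + q)) ℂ) :
    Matrix (Fin (p + q)) (Fin (p + q)) ℂ :=
  Jpq p q * Mᴴ * Jpq p q

/-- Q = {s ∈ SL(n,ℂ) : s† = s}. -/
def Qset (p q : ℕ) : Set (Matrix (Fin (p + q)) (Fin (p + q)) ℂ) :=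
  {s | s.det = 1 ∧ dag p q s = s}

/-- An admissible traceless real diagonal: entries l, trace zero, and
every entry with index < p strictly exceeds every entry with index ≥ p. -/
def IsAdmissibleDiag (p q : ℕ) (l : Fin (p + q) → ℝ) : Prop :=
  (∑ i, l i = 0) ∧ ∀ i j : Fin (p + q), (i : ℕ) < p → p ≤ (j : ℕ) → l j < l i

/-- exp of a real diagonal matrix, as a complex matrix. -/
def expDiag (p q : ℕ) (l : Fin (p + q) → ℝ) : Matrix (Fin (p + q)) (Fin (p + q)) ℂ :=
  Matrix.diagonal (fun i => (Real.exp (l i) : ℂ))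

/-- Admissible elements of Q: G₀-conjugates of exponentials of admissible diagonals. -/
def IsAdmissibleQ (p q : ℕ) (s : Matrix (Fin (p + q)) (Fin (p + q)) ℂ) : Prop :=
  ∃ g ∈ SUpq p q, ∃ l : Fin (p + q) → ℝ, IsAdmissibleDiag p q l ∧
    s = g⁻¹ * expDiag p q l * g

/-- The group AN: upper triangular, determinant 1, positive real diagonal entries. -/
def ANset (p q : ℕ) : Set (Matrix (Fin (p + q)) (Fin (p + q)) ℂ) :=
  {b | b.det = 1 ∧ (∀ i j : Fin (p + q), j < i → b i j = 0) ∧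
    ∀ i, 0 < (b i i).re ∧ (b i i).im = 0}

/-- Admissible elements of AN: elements whose symmetrization b†b is admissible in Q. -/
def IsAdmissibleAN (p q : ℕ) (b : Matrix (Fin (p + q)) (Fin (p + q)) ℂ) : Prop :=
  b ∈ ANset p q ∧ IsAdmissibleQ p q (dag p q b * b)

/-- The sesquilinear pairing ⟨x,y⟩ = Σ_{i<p} x_i conj(y_i) − Σ_{i≥p} x_i conj(y_i). -/
def pairingC (p q : ℕ) (x y : Fin (p + q) → ℂ) : ℂ :=
  ∑ i : Fin (p + q), (if (i : ℕ) < p then 1 else -1) * (x i * (starRingEnd ℂ) (y i))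

/-- The (real) square norm ‖x‖² = ⟨x,x⟩. -/
def pnormSq (p q : ℕ) (x : Fin (p + q) → ℂ) : ℝ :=
  ∑ i : Fin (p + q), (if (i : ℕ) < p then 1 else -1) * Complex.normSq (x i)

/-- A vector is timelike if ‖x‖² > 0. -/
def Timelike (p q : ℕ) (x : Fin (p + q) → ℂ) : Prop :=
  0 < pnormSq p q x

lemma pnormSq_eq_re (p q : ℕ) (v : Fin (p + q) → ℂ) :
    pnormSq p q v = (star v ⬝ᵥ (Jpq p q).mulVec v).re := by
  simp only [pnormSq, Jpq, dotProduct, mulVec_diagonal, Pi.star_apply, Complex.re_sum]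
  refine Finset.sum_congr rfl fun i _ => ?_
  by_cases h : (i : ℕ) < p <;>
    simp [h, Complex.normSq_apply, Complex.mul_re, mul_comm]

lemma pnorm_preserve (p q : ℕ) (g : Matrix (Fin (p + q)) (Fin (p + q)) ℂ)
    (hJ : gᴴ * Jpq p q * g = Jpq p q) (v : Fin (p + q) → ℂ) :
    pnormSq p q (g.mulVec v) = pnormSq p q v := by
  rw [pnormSq_eq_re, pnormSq_eq_re]
  congr 1
  rw [Matrix.star_mulVec, Matrix.mulVec_mulVec, Matrix.dotProduct_mulVec,
    Matrix.vecMul_vecMul, ← Matrix.mul_assoc, hJ, ← Matrix.dotProduct_mulVec]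

/-- an admissible element s = g⁻¹ exp(λ) g of Q maps timelike vectors
to timelike vectors. -/
theorem admissible_maps_timelike_to_timelike
    (p q : ℕ) (hp : 1 ≤ p) (hq : 1 ≤ q)
    (l : Fin (p + q) → ℝ) (hl : IsAdmissibleDiag p q l)
    (g : Matrix (Fin (p + q)) (Fin (p + q)) ℂ) (hg : g ∈ SUpq p q)
    (s : Matrix (Fin (p + q)) (Fin (p + q)) ℂ)
    (hs : s = g⁻¹ * expDiag p q l * g)
    (x : Fin (p + q) → ℂ) (hx : Timelike p q x) :
    Timelike p q (s.mulVec x) := by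
  obtain ⟨hdet, hJ⟩ := hg
  have hgu : IsUnit g.det := by rw [hdet]; exact isUnit_one
  have hgs : g * s = expDiag p q l * g := by
    rw [hs, ← Matrix.mul_assoc, ← Matrix.mul_assoc, Matrix.mul_nonsing_inv g hgu,
      Matrix.one_mul]
  set y := g.mulVec x with hy
  have hyE : g.mulVec (s.mulVec x) = (expDiag p q l).mulVec y := by
    rw [Matrix.mulVec_mulVec, hgs, ← Matrix.mulVec_mulVec]
  have hpn : pnormSq p q (s.mulVec x) = pnormSq p q ((expDiag p q l).mulVec y) := by
    rw [← pnorm_preserve p q g hJ (s.mulVec x), hyE]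
  have hyy : pnormSq p q y = pnormSq p q x := pnorm_preserve p q g hJ x
  -- choose c = min of l over indices < p
  set F : Finset (Fin (p + q)) := Finset.univ.filter (fun i => (i : ℕ) < p) with hF
  have hFne : F.Nonempty := by
    refine ⟨⟨0, by omega⟩, ?_⟩
    simp [hF]
    omega
  set c : ℝ := (F.image l).min' (hFne.image l) with hc
  obtain ⟨i0, hi0F, hi0⟩ : ∃ i ∈ F, l i = c := by
    have := (F.image l).min'_mem (hFne.image l)
    rw [Finset.mem_image] at this
    obtain ⟨i, hi, hli⟩ := this
    exact ⟨i, hi, hli⟩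
  have hi0p : (i0 : ℕ) < p := by simpa [hF] using hi0F
  have hcle : ∀ i : Fin (p + q), (i : ℕ) < p → c ≤ l i := by
    intro i hi
    exact (F.image l).min'_le (l i) (Finset.mem_image_of_mem l (by simp [hF, hi]))
  have hclt : ∀ j : Fin (p + q), p ≤ (j : ℕ) → l j ≤ c := by
    intro j hj
    rw [← hi0]
    exact (hl.2 i0 j hi0p hj).le
  -- termwise bound
  have hterm : ∀ i : Fin (p + q),
      Real.exp c ^ 2 * ((if (i : ℕ) < p then 1 else -1) * Complex.normSq (y i))
        ≤ (if (i : ℕ) < p then 1 else -1) *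
          Complex.normSq (((expDiag p q l).mulVec y) i) := by
    intro i
    have hmv : ((expDiag p q l).mulVec y) i = (Real.exp (l i) : ℂ) * y i := by
      simp [expDiag, mulVec_diagonal]
    rw [hmv, Complex.normSq_mul, Complex.normSq_ofReal]
    by_cases h : (i : ℕ) < p
    · simp only [h, if_pos, one_mul]
      have : Real.exp c ^ 2 ≤ Real.exp (l i) ^ 2 := by
        have := Real.exp_le_exp.mpr (hcle i h)
        nlinarith [Real.exp_pos c, Real.exp_pos (l i)]
      calc Real.exp c ^ 2 * Complex.normSq (y i)
          ≤ Real.exp (l i) ^ 2 * Complex.normSq (y i) :=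
            mul_le_mul_of_nonneg_right this (Complex.normSq_nonneg _)
        _ = Real.exp (l i) * Real.exp (l i) * Complex.normSq (y i) := by ring
    · simp only [h, if_neg, not_false_iff]
      have hle : Real.exp (l i) ^ 2 ≤ Real.exp c ^ 2 := by
        have := Real.exp_le_exp.mpr (hclt i (le_of_not_gt h))
        nlinarith [Real.exp_pos c, Real.exp_pos (l i)]
      have : Real.exp (l i) * Real.exp (l i) * Complex.normSq (y i)
          ≤ Real.exp c ^ 2 * Complex.normSq (y i) := by
        nlinarith [Complex.normSq_nonneg (y i)]
      linarith
  have hsum : Real.exp c ^ 2 * pnormSq p q y ≤ pnormSq p q ((expDiag p q l).mulVec y) := by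
    rw [pnormSq, pnormSq, Finset.mul_sum]
    exact Finset.sum_le_sum fun i _ => hterm i
  have hypos : 0 < pnormSq p q y := by rw [hyy]; exact hx
  have : 0 < Real.exp c ^ 2 * pnormSq p q y :=
    mul_pos (pow_pos (Real.exp_pos c) 2) hypos
  unfold Timelike
  rw [hpn]
  linarith
end
end

section
/- Let p,q ≥ 1, n = p+q, and let λ₁,...,λ_p, μ₁,...,μ_q be real numbers with λ_i > μ_j for all i,j. Let w₁, w₂ ∈ ℂⁿ satisfy ⟨w₁,w₁⟩ = ⟨w₂,w₂⟩ = 1 and ⟨w₂,w₁⟩ = 0. Let D = diag(e^{λ₁},...,e^{λ_p}, e^{μ₁},...,e^{μ_q}) and set v₁ = D·w₁, v₂ = D·w₂. Then ‖v₂‖²·‖v₁‖² > |⟨v₂,v₁⟩|². In particular v₂ − ⟨v₂, v₁/‖v₁‖⟩·(v₁/‖v₁‖) is timelike. -/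
open Matrix Complex

noncomputable section

/-! Let `t` be the smallest of the `e^{2λ_i}`. Then `D J D = t J + Δ` with `Δ` diagonal and
positive semidefinite, because every `e^{2μ_j}` lies below `t`. For the `J`-orthonormal pair this gives
`‖vₖ‖² = t + ⟨wₖ, wₖ⟩_Δ` and `⟨v₂, v₁⟩ = ⟨w₂, w₁⟩_Δ`, so Cauchy–Schwarz for `Δ` yields
`|⟨v₂, v₁⟩|² ≤ ⟨w₂, w₂⟩_Δ ⟨w₁, w₁⟩_Δ < ‖v₂‖² ‖v₁‖²`. The Gram–Schmidt remainder has square norm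
`‖v₂‖² - |⟨v₂, v₁⟩|² / ‖v₁‖²`. -/

open Finset

lemma normSq_sum_mul_mul_conj_le {ι : Type*} (s : Finset ι) {d : ι → ℝ} (hd : ∀ i ∈ s, 0 ≤ d i)
    (x y : ι → ℂ) :
    normSq (∑ i ∈ s, (d i : ℂ) * (x i * starRingEnd ℂ (y i)))
      ≤ (∑ i ∈ s, d i * normSq (x i)) * ∑ i ∈ s, d i * normSq (y i) := by
  have htriangle : ‖∑ i ∈ s, (d i : ℂ) * (x i * starRingEnd ℂ (y i))‖
      ≤ ∑ i ∈ s, d i * (‖x i‖ * ‖y i‖) := by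
    refine (norm_sum_le _ _).trans_eq (sum_congr rfl fun i hi => ?_)
    rw [norm_mul, norm_mul, norm_conj, norm_real, Real.norm_of_nonneg (hd i hi)]
  rw [← Complex.sq_norm]
  refine (pow_le_pow_left₀ (norm_nonneg _) htriangle 2).trans ?_
  refine sum_sq_le_sum_mul_sum_of_sq_le_mul s (fun i hi => ?_) (fun i hi => ?_) fun i _ => ?_
  · exact mul_nonneg (hd i hi) (normSq_nonneg _)
  · exact mul_nonneg (hd i hi) (normSq_nonneg _)
  · rw [← Complex.sq_norm, ← Complex.sq_norm]
    exact le_of_eq (by ring)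

section

variable {p q : ℕ}

lemma ofReal_pnormSq (x : Fin (p + q) → ℂ) : (pnormSq p q x : ℂ) = pairingC p q x x := by
  simp only [pnormSq, pairingC, ofReal_sum, ofReal_mul, Complex.mul_conj]
  refine sum_congr rfl fun i _ => ?_
  split_ifs <;> simp

lemma conj_pairingC (x y : Fin (p + q) → ℂ) :
    starRingEnd ℂ (pairingC p q x y) = pairingC p q y x := by
  simp only [pairingC, map_sum, map_mul, conj_conj, apply_ite (starRingEnd ℂ), map_one, map_neg]
  exact sum_congr rfl fun i _ => by ring

lemma pairingC_sub_smul_self (x y : Fin (p + q) → ℂ) (a : ℂ) :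
    pairingC p q (x - a • y) (x - a • y) = pairingC p q x x - starRingEnd ℂ a * pairingC p q x y
      - a * pairingC p q y x + a * starRingEnd ℂ a * pairingC p q y y := by
  simp only [pairingC, Pi.sub_apply, Pi.smul_apply, smul_eq_mul, map_sub, map_mul, mul_sum,
    ← sum_sub_distrib, ← sum_add_distrib]
  exact sum_congr rfl fun i _ => by ring

lemma pairingC_smul_right (x y : Fin (p + q) → ℂ) (a : ℂ) :
    pairingC p q x (a • y) = starRingEnd ℂ a * pairingC p q x y := by
  simp only [pairingC, Pi.smul_apply, smul_eq_mul, map_mul, mul_sum]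
  exact sum_congr rfl fun i _ => by ring

lemma pnormSq_sub_proj {x v : Fin (p + q) → ℂ} (hv : 0 < pnormSq p q v) :
    pnormSq p q (x - pairingC p q x ((√(pnormSq p q v) : ℂ)⁻¹ • v) • ((√(pnormSq p q v) : ℂ)⁻¹ • v))
      = pnormSq p q x - normSq (pairingC p q x v) / pnormSq p q v := by
  set N := pnormSq p q v
  set P := pairingC p q x v
  have hN : (N : ℂ) ≠ 0 := ofReal_ne_zero.2 hv.ne'
  have hproj : pairingC p q x ((√N : ℂ)⁻¹ • v) • ((√N : ℂ)⁻¹ • v) = (P / N) • v := by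
    rw [pairingC_smul_right, smul_smul, ← ofReal_inv, conj_ofReal, mul_right_comm, ← ofReal_mul,
      ← mul_inv, Real.mul_self_sqrt hv.le, ofReal_inv, div_eq_inv_mul]
  apply ofReal_injective
  rw [hproj, ofReal_pnormSq, pairingC_sub_smul_self, ← conj_pairingC x v, ← ofReal_pnormSq,
    ← ofReal_pnormSq, ofReal_sub, ofReal_div, ← Complex.mul_conj, map_div₀, conj_ofReal]
  field_simp
  ring

lemma pairingC_expDiag_mulVec (l : Fin (p + q) → ℝ) (t : ℝ) (x y : Fin (p + q) → ℂ) :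
    pairingC p q (expDiag p q l *ᵥ x) (expDiag p q l *ᵥ y) = t * pairingC p q x y
      + ∑ i : Fin (p + q), (((if (i : ℕ) < p then 1 else -1) * (Real.exp (2 * l i) - t) : ℝ) : ℂ)
        * (x i * starRingEnd ℂ (y i)) := by
  simp only [pairingC, expDiag, mulVec_diagonal, mul_sum, map_mul, conj_ofReal,
    ← sum_add_distrib]
  refine sum_congr rfl fun i _ => ?_
  rw [two_mul, Real.exp_add]
  split_ifs <;> push_cast <;> ring

lemma exists_pos_signed_exp_sub_nonneg (hp : 1 ≤ p) {l : Fin (p + q) → ℝ}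
    (hl : ∀ i j : Fin (p + q), (i : ℕ) < p → p ≤ (j : ℕ) → l j < l i) :
    ∃ t > 0, ∀ i : Fin (p + q), 0 ≤ (if (i : ℕ) < p then 1 else -1) * (Real.exp (2 * l i) - t) := by
  obtain ⟨i₀, hi₀, hmin⟩ := exists_min_image ({i : Fin (p + q) | (i : ℕ) < p} : Finset _) l
    ⟨⟨0, by omega⟩, by simp; omega⟩
  rw [mem_filter_univ] at hi₀
  refine ⟨Real.exp (2 * l i₀), Real.exp_pos _, fun i => ?_⟩
  split_ifs with hi
  · have := hmin i ((mem_filter_univ i).2 hi)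
    rw [one_mul, sub_nonneg, Real.exp_le_exp]
    linarith
  · have := hl i₀ i hi₀ (not_lt.1 hi)
    rw [neg_one_mul, neg_nonneg, sub_nonpos, Real.exp_le_exp]
    linarith

end

theorem gram_schmidt_step_timelike_general
    (p q : ℕ) (hp : 1 ≤ p)
    (l : Fin (p + q) → ℝ)
    (hl : ∀ i j : Fin (p + q), (i : ℕ) < p → p ≤ (j : ℕ) → l j < l i)
    (w₁ w₂ : Fin (p + q) → ℂ)
    (hw₁ : pairingC p q w₁ w₁ = 1) (hw₂ : pairingC p q w₂ w₂ = 1)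
    (hw12 : pairingC p q w₂ w₁ = 0)
    (v₁ v₂ : Fin (p + q) → ℂ)
    (hv₁ : v₁ = (expDiag p q l).mulVec w₁) (hv₂ : v₂ = (expDiag p q l).mulVec w₂) :
    Complex.normSq (pairingC p q v₂ v₁) < pnormSq p q v₂ * pnormSq p q v₁ ∧
    Timelike p q (v₂ - (pairingC p q v₂ ((Real.sqrt (pnormSq p q v₁) : ℂ)⁻¹ • v₁)) •
      ((Real.sqrt (pnormSq p q v₁) : ℂ)⁻¹ • v₁)) := by
  obtain ⟨t, ht, hd⟩ := exists_pos_signed_exp_sub_nonneg hp hl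
  set d : Fin (p + q) → ℝ := fun i => (if (i : ℕ) < p then 1 else -1) * (Real.exp (2 * l i) - t)
  have hnorm : ∀ w, pairingC p q w w = 1 →
      pnormSq p q (expDiag p q l *ᵥ w) = t + ∑ i, d i * normSq (w i) := by
    intro w hw
    apply ofReal_injective
    rw [ofReal_pnormSq, pairingC_expDiag_mulVec l t, hw, mul_one, ofReal_add, ofReal_sum]
    simp only [ofReal_mul, Complex.mul_conj, d]
  have hpair : pairingC p q v₂ v₁ = ∑ i, (d i : ℂ) * (w₂ i * starRingEnd ℂ (w₁ i)) := by
    rw [hv₁, hv₂, pairingC_expDiag_mulVec l t, hw12, mul_zero, zero_add]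
  have hP₁ : 0 ≤ ∑ i, d i * normSq (w₁ i) :=
    sum_nonneg fun i _ => mul_nonneg (hd i) (normSq_nonneg _)
  have hP₂ : 0 ≤ ∑ i, d i * normSq (w₂ i) :=
    sum_nonneg fun i _ => mul_nonneg (hd i) (normSq_nonneg _)
  have hlt : normSq (pairingC p q v₂ v₁) < pnormSq p q v₂ * pnormSq p q v₁ := by
    rw [hpair, hv₁, hv₂, hnorm w₁ hw₁, hnorm w₂ hw₂]
    nlinarith [normSq_sum_mul_mul_conj_le univ (fun i _ => hd i) w₂ w₁]
  have hv₁pos : 0 < pnormSq p q v₁ := by rw [hv₁, hnorm w₁ hw₁]; positivity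
  rw [Timelike, pnormSq_sub_proj hv₁pos, sub_pos, div_lt_iff₀ hv₁pos]
  exact ⟨hlt, hlt⟩

/-- for pseudo-orthonormal w₁, w₂ and D = exp of an admissible diagonal,
with v₁ = D w₁, v₂ = D w₂ we have ‖v₂‖²‖v₁‖² > |⟨v₂,v₁⟩|²; in particular the
Gram–Schmidt remainder v₂ − ⟨v₂, v₁/‖v₁‖⟩ (v₁/‖v₁‖) is timelike. -/
theorem gram_schmidt_step_timelike
    (p q : ℕ) (hp : 1 ≤ p) (hq : 1 ≤ q)
    (l : Fin (p + q) → ℝ)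
    (hl : ∀ i j : Fin (p + q), (i : ℕ) < p → p ≤ (j : ℕ) → l j < l i)
    (w₁ w₂ : Fin (p + q) → ℂ)
    (hw₁ : pairingC p q w₁ w₁ = 1) (hw₂ : pairingC p q w₂ w₂ = 1)
    (hw12 : pairingC p q w₂ w₁ = 0)
    (v₁ v₂ : Fin (p + q) → ℂ)
    (hv₁ : v₁ = (expDiag p q l).mulVec w₁) (hv₂ : v₂ = (expDiag p q l).mulVec w₂) :
    Complex.normSq (pairingC p q v₂ v₁) < pnormSq p q v₂ * pnormSq p q v₁ ∧
    Timelike p q (v₂ - (pairingC p q v₂ ((Real.sqrt (pnormSq p q v₁) : ℂ)⁻¹ • v₁)) •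
      ((Real.sqrt (pnormSq p q v₁) : ℂ)⁻¹ • v₁)) :=
  gram_schmidt_step_timelike_general p q hp l hl w₁ w₂ hw₁ hw₂ hw12 v₁ v₂ hv₁ hv₂
end
end

section
/- Let p,q ≥ 1, n = p+q, and let s ∈ Q be admissible. If x ∈ ℂⁿ is a nonzero null vector (‖x‖² = 0, x ≠ 0), then s·x is timelike (‖s·x‖² > 0). -/
open Matrix Complex

noncomputable section

section Aux

lemma pnormSq_eq_dot (p q : ℕ) (v : Fin (p+q) → ℂ) :
    (pnormSq p q v : ℂ) = star v ⬝ᵥ (Jpq p q).mulVec v := by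
  simp only [pnormSq, Jpq, dotProduct, mulVec_diagonal, Pi.star_apply, Complex.ofReal_sum]
  refine Finset.sum_congr rfl fun i _ => ?_
  have h2 : star (v i) * v i = (Complex.normSq (v i) : ℂ) := by
    simpa using (Complex.normSq_eq_conj_mul_self (z := v i)).symm
  split_ifs <;> push_cast <;> rw [← h2] <;> ring

lemma quad_conj {n : ℕ} (M N : Matrix (Fin n) (Fin n) ℂ) (x : Fin n → ℂ) :
    star (M.mulVec x) ⬝ᵥ N.mulVec (M.mulVec x) = star x ⬝ᵥ (Mᴴ * N * M).mulVec x := by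
  rw [star_mulVec, mulVec_mulVec, ← dotProduct_mulVec, mulVec_mulVec, Matrix.mul_assoc]

end Aux

/-- an admissible element of Q maps nonzero null vectors into the
timelike cone. -/
theorem admissible_maps_null_to_timelike
    (p q : ℕ) (hp : 1 ≤ p) (hq : 1 ≤ q)
    (s : Matrix (Fin (p + q)) (Fin (p + q)) ℂ)
    (hs : s ∈ Qset p q) (hadm : IsAdmissibleQ p q s)
    (x : Fin (p + q) → ℂ) (hxnull : pnormSq p q x = 0) (hx0 : x ≠ 0) :
    Timelike p q (s.mulVec x) := by
  obtain ⟨g, ⟨hgdet, hgJ⟩, l, ⟨-, hl⟩, hsgl⟩ := hadm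
  have hgu : IsUnit g.det := by simp [hgdet]
  have hginv : g⁻¹ * g = 1 := Matrix.nonsing_inv_mul g hgu
  have hginv' : g * g⁻¹ = 1 := Matrix.mul_nonsing_inv g hgu
  set J := Jpq p q with hJ
  set y := g.mulVec x with hy
  -- (gᴴ)⁻¹ * J * g⁻¹ = J
  have hgJ' : (gᴴ)⁻¹ * J * g⁻¹ = J := by
    have h0 : (gᴴ)⁻¹ * (gᴴ * J * g) * g⁻¹ = (gᴴ)⁻¹ * J * g⁻¹ := by rw [hgJ]
    rw [← h0]
    have h1 : (gᴴ)⁻¹ * gᴴ = 1 := Matrix.nonsing_inv_mul gᴴ (by simp [hgdet])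
    calc (gᴴ)⁻¹ * (gᴴ * J * g) * g⁻¹ = ((gᴴ)⁻¹ * gᴴ) * J * (g * g⁻¹) := by
          simp only [Matrix.mul_assoc]
      _ = J := by rw [h1, hginv']; simp
  -- the diagonal with entries ε_i exp(l i)^2
  set E : Matrix (Fin (p+q)) (Fin (p+q)) ℂ :=
    Matrix.diagonal (fun i => (if (i : ℕ) < p then 1 else -1) * (Real.exp (l i))^2) with hE
  have hDhE : sᴴ * J * s = gᴴ * E * g := by
    have hDH : (expDiag p q l)ᴴ = expDiag p q l := by
      ext i j
      by_cases h : i = j <;>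
        simp [expDiag, Matrix.diagonal, Matrix.conjTranspose_apply, h, eq_comm,
          ← Complex.ofReal_exp, Complex.conj_ofReal]
    have hsH : sᴴ = gᴴ * expDiag p q l * (gᴴ)⁻¹ := by
      rw [hsgl, Matrix.conjTranspose_mul, Matrix.conjTranspose_mul, hDH,
        Matrix.conjTranspose_nonsing_inv]
      simp [Matrix.mul_assoc]
    rw [hsH, hsgl]
    have h3 : gᴴ * expDiag p q l * (gᴴ)⁻¹ * J * (g⁻¹ * expDiag p q l * g)
        = gᴴ * (expDiag p q l * ((gᴴ)⁻¹ * J * g⁻¹) * expDiag p q l) * g := by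
      simp only [Matrix.mul_assoc]
    rw [h3, hgJ']
    congr 2
    rw [hE, hJ, expDiag, Jpq, Matrix.diagonal_mul_diagonal, Matrix.diagonal_mul_diagonal]
    ext i j
    by_cases h : i = j
    · subst h
      simp only [Matrix.diagonal_apply_eq]
      push_cast
      ring
    · rw [Matrix.diagonal_apply_ne _ h, Matrix.diagonal_apply_ne _ h]
  -- key identity for pnormSq (s x)
  have key : pnormSq p q (s.mulVec x)
      = ∑ i : Fin (p+q), (if (i : ℕ) < p then 1 else -1) * ((Real.exp (l i))^2 * Complex.normSq (y i)) := by
    have hc : (pnormSq p q (s.mulVec x) : ℂ)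
        = ((∑ i : Fin (p+q), (if (i : ℕ) < p then 1 else -1)
            * ((Real.exp (l i))^2 * Complex.normSq (y i)) : ℝ) : ℂ) := by
      rw [pnormSq_eq_dot, quad_conj, ← hJ, hDhE]
      have h4 : (gᴴ * E * g).mulVec x = gᴴ.mulVec (E.mulVec y) := by
        rw [hy, mulVec_mulVec, mulVec_mulVec, Matrix.mul_assoc]
      rw [h4, dotProduct_mulVec, ← star_mulVec, ← hy]
      simp only [dotProduct, mulVec_diagonal, Pi.star_apply, hE, Complex.ofReal_sum]
      refine Finset.sum_congr rfl fun i _ => ?_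
      have h2 : star (y i) * y i = (Complex.normSq (y i) : ℂ) := by
        simpa using (Complex.normSq_eq_conj_mul_self (z := y i)).symm
      split_ifs <;> push_cast <;> rw [← h2] <;> ring
    exact_mod_cast hc
  -- null condition in terms of y
  have hyx : pnormSq p q y = pnormSq p q x := by
    have hc : (pnormSq p q y : ℂ) = (pnormSq p q x : ℂ) := by
      rw [pnormSq_eq_dot, pnormSq_eq_dot, hy, quad_conj, ← hJ, hgJ]
    exact_mod_cast hc
  have null : ∑ i : Fin (p+q), (if (i : ℕ) < p then 1 else -1) * Complex.normSq (y i) = 0 := by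
    have := hyx.trans hxnull
    simpa [pnormSq] using this
  -- split sums over the two index blocks
  set A := Finset.univ.filter (fun i : Fin (p+q) => (i : ℕ) < p) with hA
  set B := Finset.univ.filter (fun i : Fin (p+q) => ¬ (i : ℕ) < p) with hB
  have hsplit : ∀ t : Fin (p+q) → ℝ,
      ∑ i : Fin (p+q), (if (i : ℕ) < p then 1 else -1) * t i = ∑ i ∈ A, t i - ∑ i ∈ B, t i := by
    intro t
    rw [← Finset.sum_filter_add_sum_filter_not Finset.univ (fun i : Fin (p+q) => (i : ℕ) < p)]
    have h1 : ∑ i ∈ A, (if (i : ℕ) < p then (1:ℝ) else -1) * t i = ∑ i ∈ A, t i :=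
      Finset.sum_congr rfl fun i hi => by
        rw [hA, Finset.mem_filter] at hi; simp [hi.2]
    have h2 : ∑ i ∈ B, (if (i : ℕ) < p then (1:ℝ) else -1) * t i = ∑ i ∈ B, -(t i) :=
      Finset.sum_congr rfl fun i hi => by
        rw [hB, Finset.mem_filter] at hi; simp [hi.2]
    rw [← hA, ← hB] at *
    rw [h1, h2, Finset.sum_neg_distrib]
    ring
  have hnullAB : ∑ i ∈ A, Complex.normSq (y i) = ∑ i ∈ B, Complex.normSq (y i) := by
    have := (hsplit (fun i => Complex.normSq (y i))).symm.trans null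
    linarith
  set c := ∑ i ∈ B, Complex.normSq (y i) with hcdef
  -- y ≠ 0
  have hy0 : y ≠ 0 := by
    intro h
    apply hx0
    have : x = g⁻¹.mulVec y := by
      rw [hy, mulVec_mulVec, hginv, Matrix.one_mulVec]
    rw [this, h, Matrix.mulVec_zero]
  -- c > 0
  have hc_pos : 0 < c := by
    rcases (Finset.sum_nonneg fun i _ => Complex.normSq_nonneg (y i) :
        (0:ℝ) ≤ c).lt_or_eq with h | h
    · exact h
    · exfalso
      apply hy0
      funext i
      have hAz : ∀ j ∈ A, Complex.normSq (y j) = 0 := by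
        rw [← Finset.sum_eq_zero_iff_of_nonneg fun j _ => Complex.normSq_nonneg (y j)]
        rw [hnullAB]; exact h.symm
      have hBz : ∀ j ∈ B, Complex.normSq (y j) = 0 := by
        rw [← Finset.sum_eq_zero_iff_of_nonneg fun j _ => Complex.normSq_nonneg (y j)]
        rw [← hcdef]; exact h.symm
      have : Complex.normSq (y i) = 0 := by
        by_cases hip : (i : ℕ) < p
        · exact hAz i (by rw [hA]; simp [hip])
        · exact hBz i (by rw [hB]; simp; omega)
      simpa using Complex.normSq_eq_zero.mp this
  -- extremal exponents
  have hAne : A.Nonempty := ⟨⟨0, by omega⟩, by rw [hA]; simp; omega⟩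
  have hBne : B.Nonempty := ⟨⟨p, by omega⟩, by rw [hB]; simp⟩
  obtain ⟨i₀, hi₀, hmin⟩ := A.exists_min_image l hAne
  obtain ⟨j₀, hj₀, hmax⟩ := B.exists_max_image l hBne
  have hi₀p : (i₀ : ℕ) < p := by rw [hA] at hi₀; simpa using hi₀
  have hj₀p : p ≤ (j₀ : ℕ) := by rw [hB] at hj₀; simpa using hj₀
  have hlt : l j₀ < l i₀ := hl i₀ j₀ hi₀p hj₀p
  -- bounds
  have h_low : Real.exp (l i₀)^2 * (∑ i ∈ A, Complex.normSq (y i))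
      ≤ ∑ i ∈ A, Real.exp (l i)^2 * Complex.normSq (y i) := by
    rw [Finset.mul_sum]
    refine Finset.sum_le_sum fun i hi => ?_
    have h5 := Real.exp_le_exp.mpr (hmin i hi)
    have h7 : Real.exp (l i₀)^2 ≤ Real.exp (l i)^2 :=
      pow_le_pow_left₀ (Real.exp_pos (l i₀)).le h5 2
    exact mul_le_mul_of_nonneg_right h7 (Complex.normSq_nonneg (y i))
  have h_high : ∑ i ∈ B, Real.exp (l i)^2 * Complex.normSq (y i)
      ≤ Real.exp (l j₀)^2 * c := by
    rw [hcdef, Finset.mul_sum]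
    refine Finset.sum_le_sum fun i hi => ?_
    have h5 := Real.exp_le_exp.mpr (hmax i hi)
    have h7 : Real.exp (l i)^2 ≤ Real.exp (l j₀)^2 :=
      pow_le_pow_left₀ (Real.exp_pos (l i)).le h5 2
    exact mul_le_mul_of_nonneg_right h7 (Complex.normSq_nonneg (y i))
  have hexplt : Real.exp (l j₀)^2 < Real.exp (l i₀)^2 := by
    have h5 := Real.exp_lt_exp.mpr hlt
    have h6 := Real.exp_pos (l j₀)
    nlinarith
  -- conclude
  rw [Timelike, key, hsplit (fun i => Real.exp (l i)^2 * Complex.normSq (y i))]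
  have hAc : ∑ i ∈ A, Complex.normSq (y i) = c := by rw [hnullAB]
  nlinarith [h_low, h_high, hexplt, hc_pos, hAc]
end
end

section
/- Let p,q ≥ 1, n = p+q. The matrix exponential is injective on the set of admissible elements of 𝔮: if X₁ = g₁⁻¹·λ⁽¹⁾·g₁ and X₂ = g₂⁻¹·λ⁽²⁾·g₂ with g₁,g₂ ∈ SU(p,q) and λ⁽¹⁾, λ⁽²⁾ admissible traceless real diagonal matrices, and exp(X₁) = exp(X₂), then X₁ = X₂. -/
open Matrix Complex

noncomputable section

/-! If `X` is diagonalisable with real eigenvalues, then `X = P (exp X)` for every polynomial `P`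
with `P (e^λ) = λ` at its eigenvalues `λ`, because `exp` is injective on `ℝ`. Interpolating over the
eigenvalues of both `X₁` and `X₂` gives one such `P` for both, so `exp X₁ = exp X₂` forces
`X₁ = X₂`. -/

open Polynomial

theorem Polynomial.aeval_units_conj {R A : Type*} [CommSemiring R] [Ring A] [Algebra R A]
    (u : Aˣ) (x : A) (P : R[X]) :
    aeval (↑u⁻¹ * x * ↑u) P = ↑u⁻¹ * aeval x P * ↑u := by
  simpa [ConjAct.units_smul_def] using
    aeval_algHom_apply (MulSemiringAction.toAlgHom R A (ConjAct.toConjAct u⁻¹)) x P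

theorem Matrix.aeval_diagonal {R α ι : Type*} [CommSemiring R] [Semiring α] [Algebra R α]
    [Fintype ι] [DecidableEq ι] (d : ι → α) (P : R[X]) :
    aeval (diagonal d) P = diagonal fun i => aeval (d i) P := by
  rw [← diagonalAlgHom_apply R, aeval_algHom_apply, aeval_pi_apply, diagonalAlgHom_apply]

theorem Real.exists_polynomial_eval_cexp_eq (S : Finset ℝ) :
    ∃ P : ℂ[X], ∀ x ∈ S, P.eval (Complex.exp x) = x := by
  have hinj : Set.InjOn (fun x : ℝ => Complex.exp x) S := fun x _ y _ h =>
    Real.exp_injective <| Complex.ofReal_injective <| by simpa [← Complex.ofReal_exp] using h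
  exact ⟨Lagrange.interpolate S _ (fun x => (x : ℂ)),
    fun x hx => Lagrange.eval_interpolate_at_node _ hinj hx⟩

namespace Matrix

variable {ι : Type*} [Fintype ι] [DecidableEq ι]

theorem aeval_exp_conj_diagonal {g : Matrix ι ι ℂ} (hg : IsUnit g) (d : ι → ℂ) (P : ℂ[X])
    (hP : ∀ i, P.eval (Complex.exp (d i)) = d i) :
    aeval (NormedSpace.exp (g⁻¹ * diagonal d * g)) P = g⁻¹ * diagonal d * g := by
  obtain ⟨u, rfl⟩ := hg
  rw [exp_conj' _ _ u.isUnit, exp_diagonal, ← coe_units_inv, aeval_units_conj,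
    aeval_diagonal, Pi.exp_def]
  simp only [← Complex.exp_eq_exp_ℂ, coe_aeval_eq_eval, hP]

theorem exp_conj_diagonal_ofReal_injective {g₁ g₂ : Matrix ι ι ℂ} (hg₁ : IsUnit g₁)
    (hg₂ : IsUnit g₂) (l₁ l₂ : ι → ℝ)
    (h : NormedSpace.exp (g₁⁻¹ * diagonal (fun i => (l₁ i : ℂ)) * g₁) =
      NormedSpace.exp (g₂⁻¹ * diagonal (fun i => (l₂ i : ℂ)) * g₂)) :
    g₁⁻¹ * diagonal (fun i => (l₁ i : ℂ)) * g₁ = g₂⁻¹ * diagonal (fun i => (l₂ i : ℂ)) * g₂ := by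
  obtain ⟨P, hP⟩ :=
    Real.exists_polynomial_eval_cexp_eq (Finset.univ.image l₁ ∪ Finset.univ.image l₂)
  rw [← aeval_exp_conj_diagonal hg₁ _ P fun i => hP _ (by simp), h,
    aeval_exp_conj_diagonal hg₂ _ P fun i => hP _ (by simp)]

end Matrix

theorem exp_injective_on_admissible_general
    (p q : ℕ)
    (g₁ g₂ : Matrix (Fin (p + q)) (Fin (p + q)) ℂ)
    (hg₁ : g₁ ∈ SUpq p q) (hg₂ : g₂ ∈ SUpq p q)
    (l₁ l₂ : Fin (p + q) → ℝ)
    (X₁ X₂ : Matrix (Fin (p + q)) (Fin (p + q)) ℂ)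
    (hX₁ : X₁ = g₁⁻¹ * Matrix.diagonal (fun i => (l₁ i : ℂ)) * g₁)
    (hX₂ : X₂ = g₂⁻¹ * Matrix.diagonal (fun i => (l₂ i : ℂ)) * g₂)
    (hexp : NormedSpace.exp X₁ = NormedSpace.exp X₂) :
    X₁ = X₂ := by
  have isUnit_of_mem {g} (hg : g ∈ SUpq p q) : IsUnit g :=
    (isUnit_iff_isUnit_det g).mpr (hg.1 ▸ isUnit_one)
  subst hX₁ hX₂
  exact exp_conj_diagonal_ofReal_injective (isUnit_of_mem hg₁) (isUnit_of_mem hg₂) l₁ l₂ hexp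

/-- the matrix exponential is injective on admissible elements of 𝔮. -/
theorem exp_injective_on_admissible
    (p q : ℕ) (hp : 1 ≤ p) (hq : 1 ≤ q)
    (g₁ g₂ : Matrix (Fin (p + q)) (Fin (p + q)) ℂ)
    (hg₁ : g₁ ∈ SUpq p q) (hg₂ : g₂ ∈ SUpq p q)
    (l₁ l₂ : Fin (p + q) → ℝ)
    (hl₁ : IsAdmissibleDiag p q l₁) (hl₂ : IsAdmissibleDiag p q l₂)
    (X₁ X₂ : Matrix (Fin (p + q)) (Fin (p + q)) ℂ)
    (hX₁ : X₁ = g₁⁻¹ * Matrix.diagonal (fun i => (l₁ i : ℂ)) * g₁)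
    (hX₂ : X₂ = g₂⁻¹ * Matrix.diagonal (fun i => (l₂ i : ℂ)) * g₂)
    (hexp : NormedSpace.exp X₁ = NormedSpace.exp X₂) :
    X₁ = X₂ :=
  exp_injective_on_admissible_general p q g₁ g₂ hg₁ hg₂ l₁ l₂ X₁ X₂ hX₁ hX₂ hexp
end
end

section
/- Let p = q = 1 and consider the 2×2 matrix s = [[t₁, m], [−conj(m), t₂]] with t₁, t₂ ∈ ℝ, m ∈ ℂ, and t₁·t₂ + |m|² = 1 (so s ∈ Q for SU(1,1)). Then s is admissible if and only if t₁ + t₂ > 2 and t₁ > 1. -/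
open Matrix Complex

noncomputable section

/-- J = diag(1, −1). -/
def J2 : Matrix (Fin 2) (Fin 2) ℂ := !![1, 0; 0, -1]

/-- SU(1,1): determinant one matrices with g* J g = J. -/
def SU11 : Set (Matrix (Fin 2) (Fin 2) ℂ) :=
  {g | g.det = 1 ∧ gᴴ * J2 * g = J2}

/-- M† = J M* J. -/
def dag2 (M : Matrix (Fin 2) (Fin 2) ℂ) : Matrix (Fin 2) (Fin 2) ℂ :=
  J2 * Mᴴ * J2

/-- AN ⊂ SL(2,ℂ): upper triangular, determinant one, positive real diagonal. -/
def AN2 : Set (Matrix (Fin 2) (Fin 2) ℂ) :=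
  {b | b.det = 1 ∧ b 1 0 = 0 ∧
    (0 < (b 0 0).re ∧ (b 0 0).im = 0) ∧ (0 < (b 1 1).re ∧ (b 1 1).im = 0)}

/-- Admissible elements of Q for SU(1,1): conjugates g⁻¹ diag(e^μ, e^{-μ}) g, μ > 0,
of exponentials of admissible traceless diagonals diag(μ, -μ). -/
def IsAdmissibleQ2 (s : Matrix (Fin 2) (Fin 2) ℂ) : Prop :=
  ∃ g ∈ SU11, ∃ lam mu : ℝ, mu < lam ∧ lam + mu = 0 ∧
    s = g⁻¹ * !![(Real.exp lam : ℂ), 0; 0, (Real.exp mu : ℂ)] * g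

/-- Admissible elements of AN for SU(1,1). -/
def IsAdmissibleAN2 (b : Matrix (Fin 2) (Fin 2) ℂ) : Prop :=
  b ∈ AN2 ∧ IsAdmissibleQ2 (dag2 b * b)

set_option maxHeartbeats 1600000

/-- s = [[t₁, m], [−conj m, t₂]] ∈ Q with t₁t₂ + |m|² = 1 is admissible
iff t₁ + t₂ > 2 and t₁ > 1. -/
theorem su11_Q_admissible_iff
    (t₁ t₂ : ℝ) (m : ℂ) (hdet : t₁ * t₂ + Complex.normSq m = 1)
    (s : Matrix (Fin 2) (Fin 2) ℂ)
    (hs : s = !![(t₁ : ℂ), m; -(starRingEnd ℂ) m, (t₂ : ℂ)]) :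
    IsAdmissibleQ2 s ↔ (2 < t₁ + t₂ ∧ 1 < t₁) := by
  constructor
  · intro h
    obtain ⟨g, ⟨hdetg, hJ⟩, lam, mu, hlt, hsum, hseq⟩ := h
    set a := g 0 0 with ha
    set b := g 0 1 with hb
    set c := g 1 0 with hc
    set d := g 1 1 with hd
    have hg : g = !![a, b; c, d] := Matrix.eta_fin_two g
    have hgH : gᴴ = !![(starRingEnd ℂ) a, (starRingEnd ℂ) c; (starRingEnd ℂ) b, (starRingEnd ℂ) d] := by
      rw [hg]; ext i j; fin_cases i <;> fin_cases j <;> simp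
    have hLJ : (!![(starRingEnd ℂ) a, -(starRingEnd ℂ) c; -(starRingEnd ℂ) b, (starRingEnd ℂ) d]
        : Matrix (Fin 2) (Fin 2) ℂ) = J2 * gᴴ * J2 := by
      rw [hgH, J2, Matrix.mul_fin_two, Matrix.mul_fin_two]
      norm_num
    have hJJ : J2 * J2 = 1 := by
      rw [J2, Matrix.mul_fin_two, Matrix.one_fin_two]; norm_num
    have hLg : (!![(starRingEnd ℂ) a, -(starRingEnd ℂ) c; -(starRingEnd ℂ) b, (starRingEnd ℂ) d]
        : Matrix (Fin 2) (Fin 2) ℂ) * g = 1 := by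
      rw [hLJ, Matrix.mul_assoc, Matrix.mul_assoc, ← Matrix.mul_assoc gᴴ J2 g, hJ, hJJ]
    have hLadj : (!![(starRingEnd ℂ) a, -(starRingEnd ℂ) c; -(starRingEnd ℂ) b, (starRingEnd ℂ) d]
        : Matrix (Fin 2) (Fin 2) ℂ) = !![d, -b; -c, a] := by
      calc (!![(starRingEnd ℂ) a, -(starRingEnd ℂ) c; -(starRingEnd ℂ) b, (starRingEnd ℂ) d]
        : Matrix (Fin 2) (Fin 2) ℂ)
          = _ * (g * Matrix.adjugate g) := by rw [Matrix.mul_adjugate, hdetg, one_smul, Matrix.mul_one]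
      _ = (_ * g) * Matrix.adjugate g := by rw [Matrix.mul_assoc]
      _ = Matrix.adjugate g := by rw [hLg, Matrix.one_mul]
      _ = !![d, -b; -c, a] := by rw [hg, Matrix.adjugate_fin_two]; simp [hg]
    have hda : (starRingEnd ℂ) a = d := by simpa using congrFun (congrFun hLadj 0) 0
    have hcb : (starRingEnd ℂ) b = c := by
      have := congrFun (congrFun hLadj 1) 0
      simp at this; exact this
    -- norm relation from hJ entry (0,0)
    have hJ' : !![(starRingEnd ℂ) a, (starRingEnd ℂ) c; (starRingEnd ℂ) b, (starRingEnd ℂ) d] * J2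
        * !![a, b; c, d] = J2 := by rw [← hgH, ← hg]; exact hJ
    rw [J2, Matrix.mul_fin_two, Matrix.mul_fin_two] at hJ'
    have hn : (starRingEnd ℂ) a * a - (starRingEnd ℂ) c * c = 1 := by
      have := congrFun (congrFun hJ' 0) 0
      simp at this; linear_combination this
    -- inverse
    have hginv : g⁻¹ = !![(starRingEnd ℂ) a, -(starRingEnd ℂ) c; -(starRingEnd ℂ) b, (starRingEnd ℂ) d] :=
      Matrix.inv_eq_left_inv hLg
    rw [hginv, hg, Matrix.mul_fin_two, Matrix.mul_fin_two] at hseq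
    rw [hs] at hseq
    set E := Real.exp lam with hE
    set E' := Real.exp mu with hE'
    have hEE' : E * E' = 1 := by rw [hE, hE', ← Real.exp_add, hsum, Real.exp_zero]
    have hE1 : 1 < E := by
      rw [hE, show (1:ℝ) = Real.exp 0 from (Real.exp_zero).symm]
      exact Real.exp_lt_exp.2 (by linarith)
    have hE'0 : 0 < E' := Real.exp_pos mu
    -- entry (0,0)
    have h00 := congrFun (congrFun hseq 0) 0
    have h11 := congrFun (congrFun hseq 1) 1
    simp at h00 h11
    rw [← hcb] at h00
    rw [← hda] at h11
    rw [Complex.conj_conj] at h00 h11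
    set na := Complex.normSq a with hna
    set nb := Complex.normSq b with hnb
    have hma : a * (starRingEnd ℂ) a = (na : ℂ) := Complex.mul_conj a
    have hmb : b * (starRingEnd ℂ) b = (nb : ℂ) := Complex.mul_conj b
    have H1 : (t₁ : ℂ) = ((na*E - nb*E' : ℝ) : ℂ) := by
      push_cast
      rw [h00]; linear_combination (E:ℂ) * hma - (E':ℂ) * hmb
    have H2 : (t₂ : ℂ) = ((na*E' - nb*E : ℝ) : ℂ) := by
      push_cast
      rw [h11]; linear_combination (E':ℂ) * hma - (E:ℂ) * hmb
    have Hn : ((na - nb : ℝ) : ℂ) = 1 := by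
      rw [← hcb] at hn
      push_cast
      rw [Complex.conj_conj] at hn
      linear_combination hn - hma + hmb
    have ht1 : t₁ = na*E - nb*E' := by exact_mod_cast H1
    have ht2 : t₂ = na*E' - nb*E := by exact_mod_cast H2
    have hnab : na - nb = 1 := by exact_mod_cast Hn
    have hnb0 : 0 ≤ nb := Complex.normSq_nonneg b
    have hEm1 : 0 < E - 1 := by linarith
    constructor
    · nlinarith [mul_pos hE'0 (mul_pos hEm1 hEm1)]
    · nlinarith [mul_nonneg hnb0 (by nlinarith : (0:ℝ) ≤ E - E')]
  · rintro ⟨hT, ht1⟩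
    obtain ⟨E, hE1, hEq⟩ : ∃ E : ℝ, 1 < E ∧ E^2 + 1 = (t₁ + t₂)*E := by
      set T := t₁ + t₂ with hTdef
      have hDr2 : (Real.sqrt (T^2 - 4))^2 = T^2 - 4 := Real.sq_sqrt (by nlinarith)
      have hDr0 : 0 ≤ Real.sqrt (T^2-4) := Real.sqrt_nonneg _
      exact ⟨(T + Real.sqrt (T^2-4))/2, by nlinarith, by nlinarith⟩
    have hE0 : (0:ℝ) < E := by linarith
    have hnm0 : 0 ≤ Complex.normSq m := Complex.normSq_nonneg m
    have hq : t₁^2 - (t₁+t₂)*t₁ + 1 = Complex.normSq m := by nlinarith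
    have ht1E : E ≤ t₁ := by
      nlinarith [mul_nonneg hE0.le hnm0, mul_pos (sub_pos.2 ht1) (sub_pos.2 hE1)]
    have hden : (0:ℝ) < E^2 - 1 := by nlinarith
    obtain ⟨a, ha0, key⟩ : ∃ a : ℝ, 0 ≤ a ∧ a^2 * (E^2 - 1) = t₁*E - 1 := by
      refine ⟨Real.sqrt ((t₁*E - 1)/(E^2 - 1)), Real.sqrt_nonneg _, ?_⟩
      rw [Real.sq_sqrt (div_nonneg (by nlinarith) hden.le)]
      field_simp
    have ha1 : 1 ≤ a^2 := by nlinarith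
    have haa : 1 ≤ a := by nlinarith
    set c := a * (E - E⁻¹) with hcdef
    have hiE : E⁻¹ * E = 1 := inv_mul_cancel₀ hE0.ne'
    have hcE : c * E = a * (E^2 - 1) := by
      rw [hcdef]; linear_combination (-a) * hiE
    have hc0 : (0:ℝ) < c := by
      have h1 : (0:ℝ) < c * E := by rw [hcE]; nlinarith
      nlinarith [h1]
    have hnmid : Complex.normSq m = c^2 * (a^2 - 1) := by
      have h1 : c^2 * (a^2-1) * E^2 = (t₁*E-1)*(t₁*E - E^2) := by
        linear_combination ((a^2-1)*(c*E + a*(E^2-1)))*hcE + ((E^2-1)*(a^2-1) + (t₁*E-1))*key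
      have h2 : Complex.normSq m * E^2 = (t₁*E-1)*(t₁*E - E^2) := by
        linear_combination (-(E^2))*hq + t₁*E*hEq
      exact mul_right_cancel₀ (pow_ne_zero 2 hE0.ne') (h2.trans h1.symm)
    -- define b and g
    set b : ℂ := m / (c : ℂ) with hbdef
    have hcC : ((c:ℝ):ℂ) ≠ 0 := by exact_mod_cast hc0.ne'
    have hbc : ((c:ℝ):ℂ) * b = m := by rw [hbdef]; field_simp
    have hnb : Complex.normSq b = a^2 - 1 := by
      rw [hbdef, Complex.normSq_div]
      rw [Complex.normSq_ofReal]
      rw [hnmid]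
      field_simp [hc0.ne']
    have hbb : b * (starRingEnd ℂ) b = ((a^2 - 1 : ℝ) : ℂ) := by
      rw [Complex.mul_conj, hnb]
    have hbb' : (starRingEnd ℂ) b * b = ((a^2 - 1 : ℝ) : ℂ) := by
      rw [mul_comm]; exact hbb
    set g : Matrix (Fin 2) (Fin 2) ℂ := !![(a:ℂ), b; (starRingEnd ℂ) b, (a:ℂ)] with hgdef
    have hdetg : g.det = 1 := by
      rw [hgdef, Matrix.det_fin_two_of]
      rw [hbb]
      push_cast
      ring
    have hgH : gᴴ = g := by
      rw [hgdef]; ext i j; fin_cases i <;> fin_cases j <;> simp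
    have hJg : gᴴ * J2 * g = J2 := by
      rw [hgH, hgdef, J2, Matrix.mul_fin_two, Matrix.mul_fin_two]
      ext i j
      fin_cases i <;> fin_cases j <;>
        simp <;> push_cast [hbb, hbb'] <;> push_cast <;> ring
    have hLg : (!![(a:ℂ), -b; -(starRingEnd ℂ) b, (a:ℂ)] : Matrix (Fin 2) (Fin 2) ℂ) * g = 1 := by
      rw [hgdef, Matrix.mul_fin_two, Matrix.one_fin_two]
      ext i j
      fin_cases i <;> fin_cases j <;>
        simp <;> push_cast [hbb, hbb'] <;> push_cast <;> ring
    have hginv : g⁻¹ = !![(a:ℂ), -b; -(starRingEnd ℂ) b, (a:ℂ)] := Matrix.inv_eq_left_inv hLg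
    refine ⟨g, ⟨hdetg, hJg⟩, Real.log E, -Real.log E, ?_, by ring, ?_⟩
    · have : 0 < Real.log E := Real.log_pos hE1
      linarith
    · rw [hginv, Real.exp_log hE0, Real.exp_neg, Real.exp_log hE0, hs, hgdef,
        Matrix.mul_fin_two, Matrix.mul_fin_two]
      -- real entry identities
      have R1 : t₁ * E = a^2*E^2 - (a^2-1) := by linear_combination (-1) * key
      have R2 : t₂ * E = a^2 - (a^2-1)*E^2 := by linear_combination key - hEq
      have hcast : ((c:ℝ):ℂ) = (a:ℂ) * ((E:ℂ) - ((E:ℝ)⁻¹ : ℝ)) := by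
        rw [hcdef]; push_cast; ring
      have hEC : ((E:ℝ):ℂ) ≠ 0 := by exact_mod_cast hE0.ne'
      have hiEC : ((E:ℝ)⁻¹ : ℂ) * (E:ℂ) = 1 := by
        push_cast; exact_mod_cast inv_mul_cancel₀ hEC
      have C1 : ((t₁:ℂ)) * E = (a:ℂ)^2*(E:ℂ)^2 - ((a:ℂ)^2 - 1) := by exact_mod_cast R1
      have C2 : ((t₂:ℂ)) * E = (a:ℂ)^2 - ((a:ℂ)^2-1)*(E:ℂ)^2 := by exact_mod_cast R2
      have CC : ((c:ℝ):ℂ) * (E:ℂ) = (a:ℂ)*((E:ℂ)^2-1) := by exact_mod_cast hcE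
      have hbc' : ((c:ℝ):ℂ) * (starRingEnd ℂ) b = (starRingEnd ℂ) m := by
        simpa [_root_.map_mul, Complex.conj_ofReal] using congrArg (starRingEnd ℂ) hbc
      have hbbC : b * (starRingEnd ℂ) b = (a:ℂ)^2 - 1 := by rw [hbb]; push_cast; ring
      have hbbC' : (starRingEnd ℂ) b * b = (a:ℂ)^2 - 1 := by rw [hbb']; push_cast; ring
      ext i j
      fin_cases i <;> fin_cases j <;> simp
      · field_simp
        linear_combination C1 + hbbC
      · field_simp
        linear_combination (-(E:ℂ))*hbc + b*CC
      · field_simp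
        linear_combination ((E:ℂ))*hbc' - (starRingEnd ℂ) b * CC
      · field_simp
        linear_combination C2 + (E:ℂ)^2 * hbbC'
end
end

section
/- Let p = q = 1 and consider b = [[r, n], [0, r⁻¹]] with r > 0 real and n ∈ ℂ (so b ∈ AN for SL(2,ℂ)). Then b is admissible if and only if r > 1 and r² + r⁻² − |n|² > 2. -/
open Matrix Complex

noncomputable section

/-!
For `b = [[r, n], [0, r⁻¹]]` one computes `s = b† b = [[r², r n], [-r n̄, r⁻² - |n|²]]`, with
`det s = 1`. If `s = g⁻¹ diag(E, E⁻¹) g` with `g ∈ SU(1,1)` and `E > 1`, then `tr s = E + E⁻¹ > 2`,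
and since `g⁻¹ = g†` and `|g₀₀|² - |g₁₀|² = 1`, `s₀₀ = E |g₀₀|² - E⁻¹ |g₁₀|² ≥ E > 1`.
Conversely, if `tr s = E + E⁻¹` with `E > 1` and `s₀₀ > 1`, the left eigenvectors of `s` for `E` and
`E⁻¹` can be normalised to the rows `(a, c)` and `(c̄, a)` of a matrix in `SU(1,1)` with `a > 0`.
-/

open ComplexConjugate

lemma J2_mul_J2 : J2 * J2 = 1 := by
  simp [J2, Matrix.one_fin_two]

lemma inv_eq_dag2_of_mem_SU11 {g : Matrix (Fin 2) (Fin 2) ℂ} (hg : g ∈ SU11) : g⁻¹ = dag2 g :=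
  Matrix.inv_eq_left_inv <| by
    rw [dag2, Matrix.mul_assoc, Matrix.mul_assoc, ← Matrix.mul_assoc _ _ g, hg.2, J2_mul_J2]

lemma normSq_sub_normSq_of_mem_SU11 {g : Matrix (Fin 2) (Fin 2) ℂ} (hg : g ∈ SU11) :
    normSq (g 0 0) - normSq (g 1 0) = 1 := by
  simpa [J2, Matrix.mul_apply, Fin.sum_univ_two, normSq_apply, sub_eq_add_neg]
    using congrArg re (congrFun (congrFun hg.2 0) 0)

lemma dag2_mul_diag_mul_apply_zero_zero (g : Matrix (Fin 2) (Fin 2) ℂ) (x y : ℂ) :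
    (dag2 g * !![x, 0; 0, y] * g) 0 0 = x * normSq (g 0 0) - y * normSq (g 1 0) := by
  simp [dag2, J2, Matrix.mul_apply, Fin.sum_univ_two, Matrix.vecMul, dotProduct,
    normSq_eq_conj_mul_self]
  ring

lemma mem_SU11_of_normSq_sub_normSq {a c : ℂ} (h : normSq a - normSq c = 1) :
    !![a, c; conj c, conj a] ∈ SU11 := by
  have h' : conj a * a - conj c * c = 1 := by
    rw [← normSq_eq_conj_mul_self, ← normSq_eq_conj_mul_self]; exact_mod_cast h
  refine ⟨?_, ?_⟩
  · rw [Matrix.det_fin_two_of]; linear_combination h'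
  · ext i j
    fin_cases i <;> fin_cases j <;> simp [J2, Matrix.mul_apply, Fin.sum_univ_two]
    · linear_combination h'
    · ring
    · ring
    · linear_combination -h'

lemma IsAdmissibleQ2.one_lt_re_and_two_lt_re_trace {s : Matrix (Fin 2) (Fin 2) ℂ}
    (hs : IsAdmissibleQ2 s) : 1 < (s 0 0).re ∧ 2 < s.trace.re := by
  obtain ⟨g, hg, lam, mu, hlt, hsum, rfl⟩ := hs
  obtain rfl : mu = -lam := by linarith
  have hlam : 0 < lam := by linarith
  constructor
  · have hE : 1 < Real.exp lam := Real.one_lt_exp_iff.mpr hlam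
    have hE' : Real.exp (-lam) < Real.exp lam := Real.exp_lt_exp.mpr hlt
    have hN := normSq_sub_normSq_of_mem_SU11 hg
    rw [inv_eq_dag2_of_mem_SU11 hg, dag2_mul_diag_mul_apply_zero_zero]
    simp only [sub_re, re_ofReal_mul, ofReal_re]
    nlinarith [normSq_nonneg (g 1 0)]
  · rw [Matrix.trace_mul_cycle, Matrix.mul_nonsing_inv _ (hg.1 ▸ isUnit_one), Matrix.one_mul,
      trace_fin_two_of]
    have := Real.one_lt_cosh.mpr hlam.ne'
    simp only [add_re, ofReal_re]
    rw [Real.cosh_eq] at this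
    linarith

lemma isAdmissibleQ2_of_mul_eq {s g : Matrix (Fin 2) (Fin 2) ℂ} (hg : g ∈ SU11) {lam : ℝ}
    (hlam : 0 < lam) (h : g * s = !![(Real.exp lam : ℂ), 0; 0, (Real.exp (-lam) : ℂ)] * g) :
    IsAdmissibleQ2 s :=
  ⟨g, hg, lam, -lam, by linarith, by ring, by
    rw [Matrix.mul_assoc, ← h, ← Matrix.mul_assoc, Matrix.nonsing_inv_mul _ (hg.1 ▸ isUnit_one),
      Matrix.one_mul]⟩

lemma exists_mem_SU11_mul_eq_diag_mul {α δ E E' : ℝ} {β : ℂ} (hdet : α * δ + normSq β = 1)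
    (hEE' : E * E' = 1) (hE'E : E' < E) (htr : E + E' = α + δ) (hα : E' < α) :
    ∃ g ∈ SU11, g * !![(α : ℂ), β; -conj β, δ] = !![(E : ℂ), 0; 0, E'] * g := by
  set d := E - E'
  have hd0 : 0 < d := sub_pos.mpr hE'E
  set a := √((α - E') / d)
  have ha0 : 0 < a := Real.sqrt_pos.mpr (div_pos (sub_pos.mpr hα) hd0)
  have ha : a ^ 2 * d = α - E' := by
    rw [Real.sq_sqrt (div_pos (sub_pos.mpr hα) hd0).le, div_mul_cancel₀ _ hd0.ne']
  set c : ℂ := β / (a * d)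
  have had : (a : ℂ) * d ≠ 0 := by exact_mod_cast (mul_pos ha0 hd0).ne'
  have hc : (a : ℂ) * d * c = β := mul_div_cancel₀ _ had
  have hnorm : normSq (a : ℂ) - normSq c = 1 := by
    rw [normSq_ofReal, normSq_div, normSq_mul, normSq_ofReal, normSq_ofReal]
    have : normSq β = (α - E) * (α - E') := by linear_combination hdet - hEE' + α * htr
    rw [this]
    field_simp
    linear_combination (a ^ 2 * d + α - E' - d) * ha
  refine ⟨_, mem_SU11_of_normSq_sub_normSq hnorm, ?_⟩
  have hdetC : (α : ℂ) * δ + β * conj β = 1 := by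
    rw [mul_conj]; exact_mod_cast hdet
  have haC : (a : ℂ) ^ 2 * d = α - E' := by exact_mod_cast ha
  have hEE'C : (E : ℂ) * E' = 1 := by exact_mod_cast hEE'
  have htrC : (E : ℂ) + E' = α + δ := by exact_mod_cast htr
  have hc' : (a : ℂ) * d * conj c = conj β := by
    simpa [conj_ofReal] using congrArg conj hc
  ext i j
  fin_cases i <;> fin_cases j <;> simp [Matrix.mul_apply, Fin.sum_univ_two, conj_ofReal] <;>
    refine mul_left_cancel₀ had ?_
  · linear_combination (α - E) * haC - conj β * hc - α * htrC + hEE'C - hdetC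
  · linear_combination β * haC + (δ - E) * hc - β * htrC
  · linear_combination (α - E') * hc' - conj β * haC
  · linear_combination β * hc' + (δ - E') * haC + hdetC + E' * htrC - hEE'C

theorem isAdmissibleQ2_iff {α δ : ℝ} {β : ℂ} (hdet : α * δ + normSq β = 1) :
    IsAdmissibleQ2 !![(α : ℂ), β; -conj β, δ] ↔ 1 < α ∧ 2 < α + δ := by
  refine ⟨fun h ↦ by simpa [trace_fin_two_of] using h.one_lt_re_and_two_lt_re_trace, ?_⟩
  rintro ⟨hα, htr⟩
  set lam := Real.arcosh ((α + δ) / 2)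
  have hlam : 0 < lam := Real.arcosh_pos (by linarith)
  have hcosh : Real.exp lam + Real.exp (-lam) = α + δ := by
    have := Real.cosh_arcosh (x := (α + δ) / 2) (by linarith)
    rw [Real.cosh_eq] at this
    linarith
  have hexp : Real.exp (-lam) < 1 := Real.exp_lt_one_iff.mpr (neg_neg_of_pos hlam)
  obtain ⟨g, hg, hgs⟩ := exists_mem_SU11_mul_eq_diag_mul hdet
    (by rw [← Real.exp_add, add_neg_cancel, Real.exp_zero])
    (Real.exp_lt_exp.mpr (by linarith)) hcosh (hexp.trans hα)
  exact isAdmissibleQ2_of_mul_eq hg hlam hgs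

lemma dag2_mul_self_upperTriangular (x y : ℝ) (n : ℂ) :
    dag2 !![(x : ℂ), n; 0, y] * !![(x : ℂ), n; 0, y] =
      !![((x ^ 2 : ℝ) : ℂ), x * n; -conj (x * n), ((y ^ 2 - normSq n : ℝ) : ℂ)] := by
  ext i j
  fin_cases i <;> fin_cases j <;>
    simp [dag2, J2, Matrix.mul_apply, Fin.sum_univ_two, vecMul, dotProduct,
      normSq_eq_conj_mul_self, conj_ofReal] <;> ring

lemma upperTriangular_mem_AN2 {x y : ℝ} (hx : 0 < x) (hy : 0 < y) (hxy : x * y = 1) (n : ℂ) :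
    !![(x : ℂ), n; 0, y] ∈ AN2 :=
  ⟨by rw [det_fin_two_of, mul_zero, sub_zero]; exact_mod_cast hxy, by simp, by simpa, by simpa⟩

/-- b = [[r, n], [0, r⁻¹]] ∈ AN is admissible iff r > 1 and
r² + r⁻² − |n|² > 2. -/
theorem su11_AN_admissible_iff
    (r : ℝ) (hr : 0 < r) (n : ℂ)
    (b : Matrix (Fin 2) (Fin 2) ℂ)
    (hb : b = !![(r : ℂ), n; 0, ((r⁻¹ : ℝ) : ℂ)]) :
    IsAdmissibleAN2 b ↔ (1 < r ∧ 2 < r ^ 2 + r⁻¹ ^ 2 - Complex.normSq n) := by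
  have hrr : r * r⁻¹ = 1 := mul_inv_cancel₀ hr.ne'
  have hdet : r ^ 2 * (r⁻¹ ^ 2 - normSq n) + normSq (r * n) = 1 := by
    rw [normSq_mul, normSq_ofReal]; linear_combination (r * r⁻¹ + 1) * hrr
  rw [hb, IsAdmissibleAN2, and_iff_right (upperTriangular_mem_AN2 hr (inv_pos.mpr hr) hrr n),
    dag2_mul_self_upperTriangular, isAdmissibleQ2_iff hdet, one_lt_sq_iff₀ hr.le, add_sub_assoc]
end
end

section
/- Let g = [[a, b], [c, d]] ∈ SL(2,ℂ) (so a·d − b·c = 1). Then g can be written as g = h·n with h ∈ SU(1,1) and n ∈ AN (upper triangular with positive real diagonal entries, determinant 1) if and only if |a| > |c|. -/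
open Matrix Complex

noncomputable section

/-! The form `g ↦ gᴴ J g` is invariant under left multiplication by SU(1,1), and its
`(0,0)` entry is `|g₀₀|² - |g₁₀|²`. For `n ∈ AN` that entry is `|n₀₀|² > 0`, which gives `|a| > |c|`.
Conversely, `gᴴ J g` is Hermitian of determinant `-1` with positive `(0,0)` entry `|a|² - |c|²`;
such a matrix factors as `nᴴ J n` with `n ∈ AN` (a Cholesky factorization for the form `J`), and
then `g n⁻¹ ∈ SU(1,1)`. -/

lemma isHermitian_J2 : J2.IsHermitian := by
  ext i j; fin_cases i <;> fin_cases j <;> simp [J2]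

lemma det_J2 : J2.det = -1 := by simp [J2, det_fin_two_of]

lemma re_conjTranspose_mul_J2_mul_apply_zero_zero (g : Matrix (Fin 2) (Fin 2) ℂ) :
    ((gᴴ * J2 * g) 0 0).re = normSq (g 0 0) - normSq (g 1 0) := by
  simp only [J2, Fin.isValue, mul_apply, conjTranspose_apply, RCLike.star_def, of_apply, cons_val',
    cons_val_fin_one, Fin.sum_univ_two, cons_val_zero, cons_val_one, mul_one, mul_zero, add_zero,
    mul_neg, zero_add, neg_mul, add_re, mul_re, conj_re, conj_im, sub_neg_eq_add, neg_re,
    neg_add_rev, normSq_apply]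
  ring

lemma conjTranspose_mul_J2_mul_of_mem_SU11 {h : Matrix (Fin 2) (Fin 2) ℂ} (hh : h ∈ SU11)
    (n : Matrix (Fin 2) (Fin 2) ℂ) : (h * n)ᴴ * J2 * (h * n) = nᴴ * J2 * n := by
  conv_rhs => rw [← hh.2]
  simp only [conjTranspose_mul, Matrix.mul_assoc]

lemma re_conjTranspose_mul_J2_mul_apply_zero_zero_pos_of_mem_AN2
    {n : Matrix (Fin 2) (Fin 2) ℂ} (hn : n ∈ AN2) : 0 < ((nᴴ * J2 * n) 0 0).re := by
  rw [re_conjTranspose_mul_J2_mul_apply_zero_zero, hn.2.1, map_zero, sub_zero]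
  exact normSq_pos.2 fun h0 => by simpa [h0] using hn.2.2.1.1

lemma mul_inv_mem_SU11 {g n : Matrix (Fin 2) (Fin 2) ℂ} (hg : g.det = 1) (hn : n.det = 1)
    (hgn : gᴴ * J2 * g = nᴴ * J2 * n) : g * n⁻¹ ∈ SU11 := by
  have hnu : IsUnit n.det := hn ▸ isUnit_one
  refine ⟨by rw [det_mul, det_nonsing_inv, hg, hn, Ring.inverse_one, mul_one], ?_⟩
  calc (g * n⁻¹)ᴴ * J2 * (g * n⁻¹) = (n⁻¹)ᴴ * (gᴴ * J2 * g) * n⁻¹ := by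
        simp only [conjTranspose_mul, Matrix.mul_assoc]
    _ = (n * n⁻¹)ᴴ * J2 * (n * n⁻¹) := by
        rw [hgn]; simp only [conjTranspose_mul, Matrix.mul_assoc]
    _ = J2 := by simp [mul_nonsing_inv n hnu]

open ComplexConjugate in
lemma exists_mem_AN2_eq_conjTranspose_mul_J2_mul {M : Matrix (Fin 2) (Fin 2) ℂ}
    (hM : M.IsHermitian) (hdet : M.det = -1) (h00 : 0 < (M 0 0).re) :
    ∃ n ∈ AN2, M = nᴴ * J2 * n := by
  set t : ℝ := Real.sqrt (M 0 0).re
  have ht : 0 < t := Real.sqrt_pos.2 h00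
  have htC : (t : ℂ) ≠ 0 := ofReal_ne_zero.2 ht.ne'
  have hM00 : M 0 0 = (t : ℂ) ^ 2 := by
    rw [← ofReal_pow, Real.sq_sqrt h00.le]
    exact (conj_eq_iff_re.1 (by simpa using congrFun (congrFun hM 0) 0)).symm
  have hM10 : M 1 0 = conj (M 0 1) := by simpa using (congrFun (congrFun hM 1) 0).symm
  have hM11 : M 1 1 * t ^ 2 = conj (M 0 1) * M 0 1 - 1 := by
    rw [det_fin_two, hM00, hM10] at hdet
    linear_combination hdet
  refine ⟨!![(t : ℂ), M 0 1 / t; 0, (t : ℂ)⁻¹], ⟨?_, rfl, ?_, ?_⟩, ?_⟩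
  · simp [det_fin_two_of, htC]
  · simpa using ht
  · simpa using ht
  · ext i j
    fin_cases i <;> fin_cases j <;>
      simp only [Fin.zero_eta, Fin.mk_one, Fin.isValue, J2, mul_apply, conjTranspose_apply, of_apply,
        cons_val', cons_val_zero, cons_val_one, cons_val_fin_one, RCLike.star_def, Fin.sum_univ_two,
        conj_ofReal, map_zero, map_div₀, map_inv₀, zero_mul, add_zero, zero_add, mul_one, mul_zero,
        mul_neg, neg_mul] <;>
      field_simp
    exacts [hM00, hM10, by linear_combination hM11]

/-- g = [[a,b],[c,d]] ∈ SL(2,ℂ) decomposes as SU(1,1)·AN iff |a| > |c|. -/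
theorem su11_iwasawa_iff
    (a b c d : ℂ) (hdet : a * d - b * c = 1)
    (g : Matrix (Fin 2) (Fin 2) ℂ) (hg : g = !![a, b; c, d]) :
    (∃ h ∈ SU11, ∃ n ∈ AN2, g = h * n) ↔ ‖c‖ < ‖a‖ := by
  have hform : ((gᴴ * J2 * g) 0 0).re = normSq a - normSq c := by
    simpa [hg] using re_conjTranspose_mul_J2_mul_apply_zero_zero g
  rw [← sq_lt_sq₀ (norm_nonneg _) (norm_nonneg _), ← normSq_eq_norm_sq, ← normSq_eq_norm_sq,
    ← sub_pos, ← hform]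
  constructor
  · rintro ⟨h, hh, n, hn, rfl⟩
    rw [conjTranspose_mul_J2_mul_of_mem_SU11 hh]
    exact re_conjTranspose_mul_J2_mul_apply_zero_zero_pos_of_mem_AN2 hn
  · intro hpos
    have hgdet : g.det = 1 := by rw [hg, det_fin_two_of, hdet]
    have hMdet : (gᴴ * J2 * g).det = -1 := by simp [hgdet, det_J2]
    obtain ⟨n, hn, hgn⟩ := exists_mem_AN2_eq_conjTranspose_mul_J2_mul
      (isHermitian_conjTranspose_mul_mul g isHermitian_J2) hMdet hpos
    exact ⟨g * n⁻¹, mul_inv_mem_SU11 hgdet hn.1 hgn, n, hn,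
      (nonsing_inv_mul_cancel_right (A := n) g (hn.1 ▸ isUnit_one)).symm⟩
end
end
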